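/- Containment of resonant neighbourhoods: for q ∈ 𝔽[X]^m with k^{N−1} ≤ ‖q‖_∞ < k^{N+1} and any ε > 0, the set B(q;ε) = {A ∈ U : ‖qA‖ < ε} is contained in the ε·k^{−N+1}-neighbourhood of the union over p ∈ 𝔽[X]^n of the affine subspaces H(q,p) = {A ∈ U : qA = p}; that is, B(q;ε) ⊆ {A ∈ U : dist(A, ∪_p H(q,p)) < ε k^{−N+1}}. -/

import Mathlib

/-!
Let `q_{i₀}` be a coordinate of `q` of maximal degree, so `|q_{i₀}| = ‖q‖ ≥ k^{N-1}`. If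
`‖qA - p‖ < ε`, first move `p` by the polynomial parts of the errors `δ = qA - p`, which makes
every `|δ_j| < 1` without increasing `‖δ‖`. Subtracting `δ / q_{i₀}` from row `i₀` of `A` then
gives a matrix `B` with `qB = p`, still in the unit cube because `|δ_j / q_{i₀}| ≤ |δ_j| < 1`,
and `dist(A, B) = ‖δ‖ / ‖q‖ < ε k^{-N+1}`.
-/

open Polynomial MeasureTheory Filter Set
open scoped Classical

noncomputable section

namespace FFapprox

variable {F : Type*} [Field F] [Fintype F]

/-- The absolute value on `𝔽((X⁻¹))`, modelled as `LaurentSeries F` in the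
variable `T = X⁻¹`: `|f| = k^(deg_X f) = k^(-order_T f)`. -/
def fabs (f : LaurentSeries F) : ℝ :=
  if f = 0 then 0 else (Fintype.card F : ℝ) ^ (-f.order)

lemma fabs_nonneg (f : LaurentSeries F) : 0 ≤ fabs f := by
  unfold fabs; split
  · exact le_refl 0
  · positivity

lemma one_le_cardF : (1 : ℝ) ≤ (Fintype.card F : ℝ) := by
  exact_mod_cast Fintype.card_pos

lemma fabs_zero : fabs (0 : LaurentSeries F) = 0 := if_pos rfl

lemma fabs_neg (f : LaurentSeries F) : fabs (-f) = fabs f := by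
  unfold fabs
  rw [HahnSeries.order_neg, neg_eq_zero]

lemma fabs_add_le (f g : LaurentSeries F) :
    fabs (f + g) ≤ max (fabs f) (fabs g) := by
  rcases eq_or_ne f 0 with rfl | hf
  · simp [fabs_zero, le_max_iff, le_refl]
  rcases eq_or_ne g 0 with rfl | hg
  · simp [fabs_zero, le_max_iff, le_refl]
  rcases eq_or_ne (f + g) 0 with hfg | hfg
  · rw [hfg, fabs_zero]
    exact le_max_of_le_left (fabs_nonneg f)
  have horder := HahnSeries.min_order_le_order_add hfg
  unfold fabs
  rw [if_neg hf, if_neg hg, if_neg hfg, le_max_iff]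
  rcases min_le_iff.mp (le_refl (min f.order g.order)) with h | h
  · rcases le_or_gt f.order g.order with hle | hlt
    · left
      refine zpow_le_zpow_right₀ one_le_cardF ?_
      simp only [neg_le_neg_iff]
      exact le_trans (by simp [min_eq_left hle]) horder
    · right
      refine zpow_le_zpow_right₀ one_le_cardF ?_
      simp only [neg_le_neg_iff]
      exact le_trans (by simp [min_eq_right hlt.le]) horder
  · rcases le_or_gt f.order g.order with hle | hlt
    · left
      refine zpow_le_zpow_right₀ one_le_cardF ?_
      simp only [neg_le_neg_iff]
      exact le_trans (by simp [min_eq_left hle]) horder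
    · right
      refine zpow_le_zpow_right₀ one_le_cardF ?_
      simp only [neg_le_neg_iff]
      exact le_trans (by simp [min_eq_right hlt.le]) horder

instance : MetricSpace (LaurentSeries F) where
  dist f g := fabs (f - g)
  dist_self f := by simp [fabs_zero]
  dist_comm f g := by
    have : g - f = -(f - g) := by ring
    try simp only []
    rw [this, fabs_neg]
  dist_triangle f g h := by
    have : f - h = (f - g) + (g - h) := by ring
    try simp only []
    rw [this]
    refine le_trans (fabs_add_le _ _) ?_
    rw [max_le_iff]
    constructor
    · exact le_add_of_nonneg_right (fabs_nonneg _)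
    · exact le_add_of_nonneg_left (fabs_nonneg _)
  eq_of_dist_eq_zero := by
    intro f g hfg
    by_contra hne
    have hsub : f - g ≠ 0 := sub_ne_zero.mpr hne
    try simp only [] at hfg
    unfold fabs at hfg
    rw [if_neg hsub] at hfg
    have : (0:ℝ) < (Fintype.card F : ℝ) ^ (-(f-g).order) := by positivity
    linarith

instance : MeasurableSpace (LaurentSeries F) := borel _

instance : BorelSpace (LaurentSeries F) := ⟨rfl⟩

/-- The embedding of `𝔽[X]` into `𝔽((X⁻¹))`, sending `X` to `T⁻¹`. -/
def pe : Polynomial F →ₐ[F] LaurentSeries F :=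
  Polynomial.aeval (HahnSeries.single (-1 : ℤ) (1 : F))

/-- `|q| = k^(deg q)` on polynomials. -/
def pabs (q : Polynomial F) : ℝ :=
  if q = 0 then 0 else (Fintype.card F : ℝ) ^ q.natDegree

/-- sup-norm of a polynomial vector. -/
def qnorm {m : ℕ} (q : Fin m → Polynomial F) : ℝ := ⨆ i, pabs (q i)

/-- sup-norm of a vector of Laurent series. -/
def vnorm {n : ℕ} (v : Fin n → LaurentSeries F) : ℝ := ⨆ i, fabs (v i)

/-- sup-norm of a matrix. -/
def mnorm {m n : ℕ} (A : Fin m → Fin n → LaurentSeries F) : ℝ := ⨆ i, vnorm (A i)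

/-- Distance of a vector to the nearest polynomial vector. -/
def pdist {n : ℕ} (v : Fin n → LaurentSeries F) : ℝ :=
  ⨅ p : Fin n → Polynomial F, vnorm (fun i => v i - pe (p i))

/-- matrix product `q A` of a polynomial row vector with a Laurent-series matrix. -/
def mulVec {m n : ℕ} (q : Fin m → Polynomial F) (A : Fin m → Fin n → LaurentSeries F) :
    Fin n → LaurentSeries F :=
  fun j => ∑ i, pe (q i) * A i j

/-- The unit cube in the space of `m × n` matrices. -/
def U (F : Type*) [Field F] [Fintype F] (m n : ℕ) : Set (Fin m → Fin n → LaurentSeries F) :=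
  {A | ∀ i j, fabs (A i j) < 1}

/-- The exponent of convergence `v(S)`. -/
def expConv {m : ℕ} (S : Set (Fin m → Polynomial F)) : ℝ :=
  sInf {v : ℝ | Summable fun q : S => qnorm (q : Fin m → Polynomial F) ^ (-v)}

/-- The set `W_S(m,n;ψ)`. -/
def WS {m n : ℕ} (S : Set (Fin m → Polynomial F))
    (ψ : (Fin m → Polynomial F) → ℝ) : Set (Fin m → Fin n → LaurentSeries F) :=
  {A | {q ∈ S | pdist (mulVec q A) < ψ q}.Infinite}


open scoped ENNReal NNReal

/-- The polynomial Euler totient `Φ(q)`. -/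
def Phi (q : Polynomial F) : ℕ :=
  Nat.card {q' : Polynomial F // pabs q' < pabs q ∧ q'.Monic ∧ IsCoprime q q'}

/-- The unit cube in `𝔽((X⁻¹))ⁿ`. -/
def U1 (F : Type*) [Field F] [Fintype F] (n : ℕ) : Set (Fin n → LaurentSeries F) :=
  {A | ∀ i, fabs (A i) < 1}

/-- `B(q,ε) = {A ∈ U : ‖qA‖ < ε}`. -/
def BallB {m n : ℕ} (q : Fin m → Polynomial F) (ε : ℝ) :
    Set (Fin m → Fin n → LaurentSeries F) :=
  {A ∈ U F m n | pdist (mulVec q A) < ε}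

/-- `B'(q,ε)` (one-dimensional case, with coprimality). -/
def BallB' {n : ℕ} (q : Polynomial F) (ε : ℝ) : Set (Fin n → LaurentSeries F) :=
  {A ∈ U1 F n | ∃ p : Fin n → Polynomial F, (∀ i, IsCoprime q (p i)) ∧
    vnorm (fun i => pe q * A i - pe (p i)) < ε}

/-- gcd of the coordinates of a polynomial vector. -/
def gcdv {m : ℕ} (q : Fin m → Polynomial F) : Polynomial F := Finset.univ.gcd q

/-- `B''(q,ε)` (higher-dimensional case, with coprimality to the gcd of coordinates). -/
def BallB'' {m n : ℕ} (q : Fin m → Polynomial F) (ε : ℝ) :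
    Set (Fin m → Fin n → LaurentSeries F) :=
  {A ∈ U F m n | ∃ p : Fin n → Polynomial F, (∀ j, IsCoprime (gcdv q) (p j)) ∧
    vnorm (fun j => mulVec q A j - pe (p j)) < ε}

/-- The resonant affine subspace `H(q,p) = {A ∈ U : qA = p}`. -/
def Hqp {m n : ℕ} (q : Fin m → Polynomial F) (p : Fin n → Polynomial F) :
    Set (Fin m → Fin n → LaurentSeries F) :=
  {A ∈ U F m n | mulVec q A = fun j => pe (p j)}

/-- The counting function `C(N;S)`. -/
def CountS {m : ℕ} (S : Set (Fin m → Polynomial F)) (N : ℕ) : ℕ :=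
  Nat.card {q : Fin m → Polynomial F // q ∈ S ∧ qnorm q ≤ N}

/-- The growth exponent `γ(S)`. -/
def gammaS {m : ℕ} (S : Set (Fin m → Polynomial F)) : ℝ :=
  sSup {γ : ℝ | 0 < Filter.atTop.limsup (fun N : ℕ => (CountS S N : ℝ≥0∞) * (N : ℝ≥0∞) ^ (-γ))}

/-- The exponent `η(ψ)`. -/
def etaExp {m : ℕ} (n : ℕ) (ψ : (Fin m → Polynomial F) → ℝ) : ℝ :=
  sInf {η : ℝ | Summable (fun q : Fin m → Polynomial F => qnorm q ^ n * (ψ q / qnorm q) ^ η)}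

/-- The exponent of convergence of `S ⊆ 𝔽[X]` (one-dimensional). -/
def expConv1 (S : Set (Polynomial F)) : ℝ :=
  sInf {v : ℝ | Summable fun q : S => pabs (q : Polynomial F) ^ (-v)}

lemma one_lt_cardF : (1 : ℝ) < Fintype.card F := by
  exact_mod_cast Fintype.one_lt_card

lemma fabs_mul (f g : LaurentSeries F) : fabs (f * g) = fabs f * fabs g := by
  rcases eq_or_ne f 0 with rfl | hf
  · simp [fabs_zero]
  rcases eq_or_ne g 0 with rfl | hg
  · simp [fabs_zero]
  simp only [fabs, hf, hg, mul_ne_zero hf hg, if_false, HahnSeries.order_mul hf hg, neg_add,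
    zpow_add₀ (zero_lt_one.trans one_lt_cardF).ne']

lemma fabs_div_mul_cancel {f g : LaurentSeries F} (hg : g ≠ 0) :
    fabs (f / g) * fabs g = fabs f := by
  rw [← fabs_mul, div_mul_cancel₀ f hg]

lemma fabs_sub_le (f g : LaurentSeries F) : fabs (f - g) ≤ max (fabs f) (fabs g) := by
  simpa only [sub_eq_add_neg, fabs_neg] using fabs_add_le f (-g)

lemma fabs_lt_one_iff {f : LaurentSeries F} : fabs f < 1 ↔ ∀ e ≤ 0, f.coeff e = 0 := by
  rcases eq_or_ne f 0 with rfl | hf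
  · simp [fabs_zero]
  have horder : 0 < f.order ↔ ∀ e ≤ 0, f.coeff e = 0 :=
    ⟨fun h e he => HahnSeries.coeff_eq_zero_of_lt_order (he.trans_lt h), fun h => by
      by_contra! h0
      exact hf (HahnSeries.coeff_order_eq_zero.mp (h _ h0))⟩
  rw [fabs, if_neg hf, zpow_lt_one_iff_right₀ one_lt_cardF, neg_neg_iff_pos, horder]

omit [Fintype F] in
lemma pe_monomial (k : ℕ) (a : F) : pe (monomial k a) = HahnSeries.single (-(k : ℤ)) a := by
  rw [pe, aeval_monomial, HahnSeries.single_pow, HahnSeries.algebraMap_apply',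
    PowerSeries.algebraMap_apply, Algebra.algebraMap_self_apply, HahnSeries.ofPowerSeries_C,
    HahnSeries.C_apply, HahnSeries.single_mul_single]
  simp

omit [Fintype F] in
lemma coeff_pe (q : F[X]) (e : ℤ) :
    (pe q).coeff e = if e ≤ 0 then q.coeff (-e).toNat else 0 := by
  induction q using Polynomial.induction_on' with
  | add p r hp hr =>
    rw [map_add, HahnSeries.coeff_add, hp, hr, coeff_add]
    split_ifs <;> simp
  | monomial k a =>
    rw [pe_monomial, HahnSeries.coeff_single, coeff_monomial]
    split_ifs <;> first | rfl | omega

omit [Fintype F] in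
lemma coeff_pe_neg_natDegree (q : F[X]) :
    (pe q).coeff (-(q.natDegree : ℤ)) = q.leadingCoeff := by
  simp [coeff_pe]

omit [Fintype F] in
lemma pe_ne_zero {q : F[X]} (hq : q ≠ 0) : pe q ≠ 0 := fun h =>
  leadingCoeff_ne_zero.mpr hq (by rw [← coeff_pe_neg_natDegree, h, HahnSeries.coeff_zero])

omit [Fintype F] in
lemma order_pe {q : F[X]} (hq : q ≠ 0) : (pe q).order = -(q.natDegree : ℤ) := by
  refine le_antisymm (HahnSeries.order_le_of_coeff_ne_zero ?_) ?_
  · rw [coeff_pe_neg_natDegree]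
    exact leadingCoeff_ne_zero.mpr hq
  by_contra! hlt
  refine HahnSeries.coeff_order_eq_zero.not.mpr (pe_ne_zero hq) ?_
  rw [coeff_pe]
  split_ifs
  · exact coeff_eq_zero_of_natDegree_lt (by omega)
  · rfl

lemma fabs_pe (q : F[X]) : fabs (pe q) = pabs q := by
  rcases eq_or_ne q 0 with rfl | hq
  · simp [fabs_zero, pabs]
  rw [fabs, pabs, if_neg (pe_ne_zero hq), if_neg hq, order_pe hq, neg_neg, zpow_natCast]

lemma one_le_pabs {q : F[X]} (hq : q ≠ 0) : 1 ≤ pabs q := by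
  rw [pabs, if_neg hq]
  exact one_le_pow₀ one_lt_cardF.le

lemma exists_fabs_sub_pe_lt_one (f : LaurentSeries F) : ∃ r : F[X], fabs (f - pe r) < 1 := by
  set K := (-f.order).toNat
  refine ⟨∑ d ∈ Finset.range (K + 1), monomial d (f.coeff (-d)), fabs_lt_one_iff.mpr ?_⟩
  intro e he
  rw [HahnSeries.coeff_sub, coeff_pe, if_pos he, finsetSum_coeff]
  simp only [coeff_monomial, Finset.sum_ite_eq', Finset.mem_range]
  split_ifs with hK
  · rw [show -((-e).toNat : ℤ) = e by omega, sub_self]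
  · rw [HahnSeries.coeff_eq_zero_of_lt_order (by omega), sub_zero]

lemma exists_fabs_sub_pe_le_and_lt_one (f : LaurentSeries F) :
    ∃ r : F[X], fabs (f - pe r) ≤ fabs f ∧ fabs (f - pe r) < 1 := by
  by_cases hf : fabs f < 1
  · exact ⟨0, by simp, by simpa using hf⟩
  · obtain ⟨r, hr⟩ := exists_fabs_sub_pe_lt_one f
    exact ⟨r, hr.le.trans (not_lt.mp hf), hr⟩

lemma fabs_le_vnorm {n : ℕ} (v : Fin n → LaurentSeries F) (j : Fin n) : fabs (v j) ≤ vnorm v :=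
  le_ciSup (f := fun j => fabs (v j)) (Set.finite_range _).bddAbove j

lemma vnorm_nonneg {n : ℕ} (v : Fin n → LaurentSeries F) : 0 ≤ vnorm v :=
  Real.iSup_nonneg fun j => fabs_nonneg (v j)

lemma vnorm_mono {n : ℕ} {v w : Fin n → LaurentSeries F} (h : ∀ j, fabs (v j) ≤ fabs (w j)) :
    vnorm v ≤ vnorm w :=
  ciSup_mono (Set.finite_range _).bddAbove h

lemma exists_pabs_eq_qnorm {m : ℕ} {q : Fin m → F[X]} (hq : 0 < qnorm q) :
    ∃ i, pabs (q i) = qnorm q := by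
  have : Nonempty (Fin m) := by
    by_contra! h
    simp [qnorm] at hq
  exact exists_eq_ciSup_of_finite

lemma exists_vnorm_sub_pe_lt_of_pdist_lt {n : ℕ} {v : Fin n → LaurentSeries F} {ε : ℝ}
    (hv : pdist v < ε) :
    ∃ p : Fin n → F[X], vnorm (fun j => v j - pe (p j)) < ε ∧ ∀ j, fabs (v j - pe (p j)) < 1 := by
  obtain ⟨p₀, hp₀⟩ := exists_lt_of_ciInf_lt hv
  choose r hr using fun j => exists_fabs_sub_pe_le_and_lt_one (v j - pe (p₀ j))
  have hsub : ∀ j, v j - pe (p₀ j + r j) = v j - pe (p₀ j) - pe (r j) := fun j => by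
    rw [map_add, sub_add_eq_sub_sub]
  refine ⟨p₀ + r, ?_, fun j => ?_⟩
  · exact (vnorm_mono fun j => (hsub j).symm ▸ (hr j).1).trans_lt hp₀
  · exact (hsub j).symm ▸ (hr j).2

omit [Fintype F] in
lemma mulVec_sub_single {m n : ℕ} (q : Fin m → F[X]) (A : Fin m → Fin n → LaurentSeries F)
    (i₀ : Fin m) (c : Fin n → LaurentSeries F) (j : Fin n) :
    mulVec q (A - Pi.single i₀ c) j = mulVec q A j - pe (q i₀) * c j := by
  simp [mulVec, mul_sub, Finset.sum_sub_distrib, Pi.single_apply,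
    apply_ite (fun f : Fin n → LaurentSeries F => f j)]

lemma exists_mem_Hqp_pabs_mul_dist_le {m n : ℕ} {q : Fin m → F[X]} {i₀ : Fin m} (hq : q i₀ ≠ 0)
    {A : Fin m → Fin n → LaurentSeries F} (hA : A ∈ U F m n) {p : Fin n → F[X]}
    (hp : ∀ j, fabs (mulVec q A j - pe (p j)) < 1) :
    ∃ B ∈ Hqp q p, pabs (q i₀) * dist A B ≤ vnorm (fun j => mulVec q A j - pe (p j)) := by
  set δ := fun j => mulVec q A j - pe (p j)
  set c := fun j => δ j / pe (q i₀)
  have hpe : pe (q i₀) ≠ 0 := pe_ne_zero hq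
  have hc : ∀ j, fabs (c j) * pabs (q i₀) = fabs (δ j) := fun j => by
    rw [← fabs_pe, fabs_div_mul_cancel hpe]
  have hc1 : ∀ j, fabs (c j) < 1 := fun j =>
    calc fabs (c j) ≤ fabs (c j) * pabs (q i₀) :=
          le_mul_of_one_le_right (fabs_nonneg _) (one_le_pabs hq)
      _ < 1 := (hc j).symm ▸ hp j
  have hpabs : 0 < pabs (q i₀) := zero_lt_one.trans_le (one_le_pabs hq)
  set S : Fin m → Fin n → LaurentSeries F := Pi.single i₀ c
  have hS : ∀ i j, fabs (S i j) ≤ fabs (c j) := fun i j => by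
    rcases eq_or_ne i i₀ with rfl | hi
    · simp [S]
    · simp [S, hi, fabs_zero, fabs_nonneg]
  refine ⟨A - S, ⟨fun i j => ?_, funext fun j => ?_⟩, ?_⟩
  · exact (fabs_sub_le _ _).trans_lt (max_lt (hA i j) ((hS i j).trans_lt (hc1 j)))
  · rw [mulVec_sub_single, mul_div_cancel₀ _ hpe, sub_sub_cancel]
  · rw [← le_div_iff₀' hpabs]
    have hr : 0 ≤ vnorm δ / pabs (q i₀) := div_nonneg (vnorm_nonneg δ) hpabs.le
    refine (dist_pi_le_iff hr).mpr fun i => (dist_pi_le_iff hr).mpr fun j => ?_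
    show fabs (A i j - (A i j - S i j)) ≤ _
    rw [sub_sub_cancel, le_div_iff₀ hpabs]
    calc fabs (S i j) * pabs (q i₀) ≤ fabs (c j) * pabs (q i₀) :=
          mul_le_mul_of_nonneg_right (hS i j) hpabs.le
      _ = fabs (δ j) := hc j
      _ ≤ vnorm δ := fabs_le_vnorm δ j

theorem ball_subset_nbhd_general {m n : ℕ}
    (q : Fin m → Polynomial F) (N : ℕ)
    (h1 : (Fintype.card F : ℝ) ^ ((N : ℤ) - 1) ≤ qnorm q)
    (ε : ℝ) :
    BallB (n := n) q ε ⊆ {A ∈ U F m n |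
      Metric.infDist A (⋃ p : Fin n → Polynomial F, Hqp q p) <
        ε * (Fintype.card F : ℝ) ^ (-(N : ℤ) + 1)} := by
  rintro A ⟨hA, hAε⟩
  refine ⟨hA, ?_⟩
  have hk : 0 < (Fintype.card F : ℝ) ^ ((N : ℤ) - 1) := zpow_pos (zero_lt_one.trans one_lt_cardF) _
  have hqnorm : 0 < qnorm q := hk.trans_le h1
  obtain ⟨i₀, hi₀⟩ := exists_pabs_eq_qnorm hqnorm
  have hq : q i₀ ≠ 0 := fun h => by simp [h, pabs] at hi₀; linarith
  obtain ⟨p, hpε, hp1⟩ := exists_vnorm_sub_pe_lt_of_pdist_lt hAε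
  obtain ⟨B, hB, hAB⟩ := exists_mem_Hqp_pabs_mul_dist_le hq hA hp1
  rw [hi₀] at hAB
  have hε : 0 ≤ ε := (vnorm_nonneg _).trans hpε.le
  calc Metric.infDist A (⋃ p, Hqp q p) ≤ dist A B :=
        Metric.infDist_le_dist_of_mem (mem_iUnion_of_mem p hB)
    _ ≤ vnorm (fun j => mulVec q A j - pe (p j)) / qnorm q := (le_div_iff₀' hqnorm).mpr hAB
    _ < ε / qnorm q := div_lt_div_of_pos_right hpε hqnorm
    _ ≤ ε / (Fintype.card F : ℝ) ^ ((N : ℤ) - 1) := div_le_div_of_nonneg_left hε hk h1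
    _ = ε * (Fintype.card F : ℝ) ^ (-(N : ℤ) + 1) := by
        rw [div_eq_mul_inv, ← zpow_neg, neg_sub, sub_eq_neg_add]

/-- `B(q;ε)` is contained in the `ε k^{-N+1}`-neighbourhood of `⋃_p H(q,p)`. -/
theorem ball_subset_nbhd {m n : ℕ} (hm : 0 < m) (hn : 0 < n)
    (q : Fin m → Polynomial F) (N : ℕ)
    (h1 : (Fintype.card F : ℝ) ^ ((N : ℤ) - 1) ≤ qnorm q)
    (h2 : qnorm q < (Fintype.card F : ℝ) ^ ((N : ℤ) + 1))
    (ε : ℝ) (hε : 0 < ε) :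
    BallB (n := n) q ε ⊆ {A ∈ U F m n |
      Metric.infDist A (⋃ p : Fin n → Polynomial F, Hqp q p) <
        ε * (Fintype.card F : ℝ) ^ (-(N : ℤ) + 1)} :=
  ball_subset_nbhd_general q N h1 ε

end FFapprox
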